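/- arXiv:2108.07217 — 3 statements merged into one kernel-verified Lean document; each statement's English description precedes it below -/
import Mathlib

section
/- For m, n ∈ ℕ with m ≥ 2n, the number of quadruples (c_1,c_2,c_3,c_4) ∈ ℕ⁴ with c_1 + c_3 + 2c_4 = m and c_2 + c_3 + c_4 = n equals (n+1)(n+2)/2. -/
theorem stmt9 (m n : ℕ) (h : m ≥ 2 * n) :
    Set.ncard {c : ℕ × ℕ × ℕ × ℕ |
        c.1 + c.2.2.1 + 2 * c.2.2.2 = m ∧ c.2.1 + c.2.2.1 + c.2.2.2 = n} =
      (n + 1) * (n + 2) / 2 := by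
  classical
  set T : Finset (ℕ × ℕ) :=
    (Finset.range (n + 1)).biUnion (fun k => Finset.HasAntidiagonal.antidiagonal k) with hT
  have hmemT : ∀ p : ℕ × ℕ, p ∈ T ↔ p.1 + p.2 ≤ n := by
    intro p
    simp only [hT, Finset.mem_biUnion, Finset.mem_range, Finset.HasAntidiagonal.mem_antidiagonal]
    constructor
    · rintro ⟨k, hk, rfl⟩; omega
    · intro hp; exact ⟨p.1 + p.2, by omega, rfl⟩
  set f : ℕ × ℕ → ℕ × ℕ × ℕ × ℕ := fun p => (m - p.1 - 2 * p.2, n - p.1 - p.2, p.1, p.2)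
    with hf
  have hset : {c : ℕ × ℕ × ℕ × ℕ |
      c.1 + c.2.2.1 + 2 * c.2.2.2 = m ∧ c.2.1 + c.2.2.1 + c.2.2.2 = n}
      = ↑(T.image f) := by
    ext ⟨c1, c2, c3, c4⟩
    simp only [Set.mem_setOf_eq, Finset.coe_image, Set.mem_image, Finset.mem_coe, hmemT, hf]
    constructor
    · rintro ⟨h1, h2⟩
      refine ⟨(c3, c4), by omega, ?_⟩
      simp only [Prod.mk.injEq]
      exact ⟨by omega, by omega, trivial⟩
    · rintro ⟨⟨a, b⟩, hab, heq⟩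
      simp only [Prod.mk.injEq] at heq
      obtain ⟨h1, h2, h3, h4⟩ := heq
      subst h3; subst h4
      simp at hab
      omega
  rw [hset, Set.ncard_coe_finset]
  have hinj : Set.InjOn f ↑T := by
    intro p _ q _ hpq
    simp only [hf, Prod.mk.injEq] at hpq
    exact Prod.ext hpq.2.2.1 hpq.2.2.2
  rw [Finset.card_image_of_injOn hinj]
  have hdisj : ∀ x ∈ Finset.range (n + 1), ∀ y ∈ Finset.range (n + 1), x ≠ y →
      Disjoint (Finset.HasAntidiagonal.antidiagonal x) (Finset.HasAntidiagonal.antidiagonal y) := by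
    intro x _ y _ hxy
    rw [Finset.disjoint_left]
    intro p hp hq
    rw [Finset.HasAntidiagonal.mem_antidiagonal] at hp hq
    omega
  rw [hT, Finset.card_biUnion hdisj]
  simp only [Finset.Nat.card_antidiagonal]
  have h1 : ∑ k ∈ Finset.range (n + 1), (k + 1)
      = (∑ k ∈ Finset.range (n + 1), k) + (n + 1) := by
    rw [Finset.sum_add_distrib, Finset.sum_const, Finset.card_range, smul_eq_mul, mul_one]
  have h2 : (∑ k ∈ Finset.range (n + 1), (k + 1)) * 2 = (n + 1) * (n + 2) := by
    rw [h1, add_mul, Finset.sum_range_id_mul_two]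
    have hx : n + 1 - 1 = n := rfl
    rw [hx]; ring
  omega
end

section
/- For m, n ∈ ℕ with n ≥ m, the number of quadruples (c_1,c_2,c_3,c_4) ∈ ℕ⁴ with c_1 + c_3 + 2c_4 = m and c_2 + c_3 + c_4 = n equals (⌊m/2⌋+1)(m-⌊m/2⌋+1). -/
lemma sum_aux (m d : ℕ) (hd : 2 * d ≤ m) :
    ∑ k ∈ Finset.range (d + 1), (m - 2 * k + 1) = (d + 1) * (m - d + 1) := by
  induction d with
  | zero => simp
  | succ d ih =>
    have hd' : 2 * d ≤ m := by omega
    rw [Finset.sum_range_succ, ih hd']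
    obtain ⟨e, rfl⟩ : ∃ e, m = 2 * d + 2 + e := ⟨m - (2 * d + 2), by omega⟩
    rw [show 2 * d + 2 + e - 2 * (d + 1) = e by omega,
        show 2 * d + 2 + e - d = d + 2 + e by omega,
        show 2 * d + 2 + e - (d + 1) = d + 1 + e by omega]
    ring

theorem stmt10 (m n : ℕ) (h : n ≥ m) :
    Set.ncard {c : ℕ × ℕ × ℕ × ℕ |
        c.1 + c.2.2.1 + 2 * c.2.2.2 = m ∧ c.2.1 + c.2.2.1 + c.2.2.2 = n} =
      (m / 2 + 1) * (m - m / 2 + 1) := by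
  have hset : {c : ℕ × ℕ × ℕ × ℕ |
        c.1 + c.2.2.1 + 2 * c.2.2.2 = m ∧ c.2.1 + c.2.2.1 + c.2.2.2 = n} =
      ↑(((Finset.range (m / 2 + 1)).biUnion fun c4 =>
          (Finset.range (m - 2 * c4 + 1)).image fun c3 =>
            (m - c3 - 2 * c4, n - c3 - c4, c3, c4))) := by
    ext ⟨a, b, c, d⟩
    simp only [Set.mem_setOf_eq, Finset.coe_biUnion, Finset.mem_coe,
      Finset.mem_range, Set.mem_iUnion, Finset.coe_image, Set.mem_image,
      Finset.mem_coe, Prod.mk.injEq]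
    constructor
    · rintro ⟨h1, h2⟩
      exact ⟨d, by omega, c, by omega, by omega, by omega, rfl, rfl⟩
    · rintro ⟨d', hd', c', hc', h1, h2, h3, h4⟩
      subst h3; subst h4; omega
  rw [hset, Set.ncard_coe_finset]
  rw [Finset.card_biUnion]
  · have hc : ∀ c4 ∈ Finset.range (m / 2 + 1),
        ((Finset.range (m - 2 * c4 + 1)).image fun c3 =>
          ((m - c3 - 2 * c4, n - c3 - c4, c3, c4) : ℕ × ℕ × ℕ × ℕ)).card
        = m - 2 * c4 + 1 := by
      intro c4 _
      rw [Finset.card_image_of_injective _ (fun x y hxy => by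
        simpa using congrArg (fun p : ℕ × ℕ × ℕ × ℕ => p.2.2.1) hxy),
        Finset.card_range]
    rw [Finset.sum_congr rfl hc]
    exact sum_aux m (m / 2) (by omega)
  · intro x _ y _ hxy
    simp only [Finset.disjoint_left, Finset.mem_image, Finset.mem_range]
    rintro p ⟨c3, _, rfl⟩ ⟨c3', _, hp⟩
    have : y = x := by simpa using congrArg (fun p : ℕ × ℕ × ℕ × ℕ => p.2.2.2) hp
    exact hxy this.symm
end

section
/- For m, n, k ∈ ℕ, the number of 9-tuples (a,b,c,d,e,f,g,h,i) ∈ ℕ⁹ satisfying a+d+f+g+2h = m, b+d+e+f+2g+2h+2i = n, and c+e+f+g+h+i = k, counted with weight q^(a+b+c+d+e+f+g+h+i), gives a polynomial in q equal to q^(m+n+k) · Σ_{h=0}^{ĥ} Σ_{g=0}^{ĝ} Σ_{f=0}^{f̂} Σ_{i=0}^{î} Σ_{d=0}^{d̂} Σ_{e=0}^{ê} q^(-(d+e+2f+3g+4h+2i)), where ĥ = min(⌊m/2⌋, ⌊n/2⌋, k), ĝ = min(m-2h, ⌊(n-2h)/2⌋, k-h), f̂ = min(m-2h-g, n-2h-2g,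 k-h-g), î = min(⌊(n-2h-2g-f)/2⌋, k-h-g-f), d̂ = min(m-2h-g-f, n-2h-2g-f-2i), ê = min(n-2h-2g-f-2i-d, k-h-g-f-i). -/
open Polynomial

private lemma hfin {N : ℕ} (f : ℕ → Polynomial ℚ) (hf : ∀ x, f x ≠ 0 → x ≤ N) :
    ∑ᶠ x, f x = ∑ x ∈ Finset.range (N + 1), f x :=
  finsum_eq_sum_of_support_subset f fun x hx =>
    Finset.mem_coe.mpr (Finset.mem_range.mpr (Nat.lt_succ_of_le (hf x hx)))

private lemma collapse9 (N : ℕ) (F : ℕ → ℕ → ℕ → ℕ → ℕ → ℕ → ℕ → ℕ → ℕ → Polynomial ℚ)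
    (hF : ∀ a b c d e f g h i, F a b c d e f g h i ≠ 0 →
      a ≤ N ∧ b ≤ N ∧ c ≤ N ∧ d ≤ N ∧ e ≤ N ∧ f ≤ N ∧ g ≤ N ∧ h ≤ N ∧ i ≤ N) :
    (∑ᶠ (a : ℕ) (b : ℕ) (c : ℕ) (d : ℕ) (e : ℕ) (f : ℕ) (g : ℕ) (h : ℕ) (i : ℕ),
        F a b c d e f g h i) =
      ∑ a ∈ Finset.range (N + 1), ∑ b ∈ Finset.range (N + 1), ∑ c ∈ Finset.range (N + 1),
      ∑ d ∈ Finset.range (N + 1), ∑ e ∈ Finset.range (N + 1), ∑ f ∈ Finset.range (N + 1),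
      ∑ g ∈ Finset.range (N + 1), ∑ h ∈ Finset.range (N + 1), ∑ i ∈ Finset.range (N + 1),
        F a b c d e f g h i := by
  have z9 : ∀ (G : ℕ → Polynomial ℚ) (j : ℕ), (∀ x, G x ≠ 0 → x ≤ N) → j ≤ N ∨
      True := fun _ _ _ => Or.inr trivial
  refine (hfin _ fun a ha => ?_).trans (Finset.sum_congr rfl fun a _ => ?_)
  · by_contra hb
    refine ha (finsum_eq_zero_of_forall_eq_zero fun b => finsum_eq_zero_of_forall_eq_zero fun c =>
      finsum_eq_zero_of_forall_eq_zero fun d => finsum_eq_zero_of_forall_eq_zero fun e =>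
      finsum_eq_zero_of_forall_eq_zero fun f => finsum_eq_zero_of_forall_eq_zero fun g =>
      finsum_eq_zero_of_forall_eq_zero fun h => finsum_eq_zero_of_forall_eq_zero fun i => ?_)
    by_contra h0
    exact hb ((hF a b c d e f g h i h0).1)
  refine (hfin _ fun b hb => ?_).trans (Finset.sum_congr rfl fun b _ => ?_)
  · by_contra hc
    refine hb (finsum_eq_zero_of_forall_eq_zero fun c =>
      finsum_eq_zero_of_forall_eq_zero fun d => finsum_eq_zero_of_forall_eq_zero fun e =>
      finsum_eq_zero_of_forall_eq_zero fun f => finsum_eq_zero_of_forall_eq_zero fun g =>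
      finsum_eq_zero_of_forall_eq_zero fun h => finsum_eq_zero_of_forall_eq_zero fun i => ?_)
    by_contra h0
    exact hc ((hF a b c d e f g h i h0).2.1)
  refine (hfin _ fun c hc => ?_).trans (Finset.sum_congr rfl fun c _ => ?_)
  · by_contra hx
    refine hc (finsum_eq_zero_of_forall_eq_zero fun d => finsum_eq_zero_of_forall_eq_zero fun e =>
      finsum_eq_zero_of_forall_eq_zero fun f => finsum_eq_zero_of_forall_eq_zero fun g =>
      finsum_eq_zero_of_forall_eq_zero fun h => finsum_eq_zero_of_forall_eq_zero fun i => ?_)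
    by_contra h0
    exact hx ((hF a b c d e f g h i h0).2.2.1)
  refine (hfin _ fun d hd => ?_).trans (Finset.sum_congr rfl fun d _ => ?_)
  · by_contra hx
    refine hd (finsum_eq_zero_of_forall_eq_zero fun e =>
      finsum_eq_zero_of_forall_eq_zero fun f => finsum_eq_zero_of_forall_eq_zero fun g =>
      finsum_eq_zero_of_forall_eq_zero fun h => finsum_eq_zero_of_forall_eq_zero fun i => ?_)
    by_contra h0
    exact hx ((hF a b c d e f g h i h0).2.2.2.1)
  refine (hfin _ fun e he => ?_).trans (Finset.sum_congr rfl fun e _ => ?_)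
  · by_contra hx
    refine he (finsum_eq_zero_of_forall_eq_zero fun f => finsum_eq_zero_of_forall_eq_zero fun g =>
      finsum_eq_zero_of_forall_eq_zero fun h => finsum_eq_zero_of_forall_eq_zero fun i => ?_)
    by_contra h0
    exact hx ((hF a b c d e f g h i h0).2.2.2.2.1)
  refine (hfin _ fun f hf => ?_).trans (Finset.sum_congr rfl fun f _ => ?_)
  · by_contra hx
    refine hf (finsum_eq_zero_of_forall_eq_zero fun g =>
      finsum_eq_zero_of_forall_eq_zero fun h => finsum_eq_zero_of_forall_eq_zero fun i => ?_)
    by_contra h0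
    exact hx ((hF a b c d e f g h i h0).2.2.2.2.2.1)
  refine (hfin _ fun g hg => ?_).trans (Finset.sum_congr rfl fun g _ => ?_)
  · by_contra hx
    refine hg (finsum_eq_zero_of_forall_eq_zero fun h =>
      finsum_eq_zero_of_forall_eq_zero fun i => ?_)
    by_contra h0
    exact hx ((hF a b c d e f g h i h0).2.2.2.2.2.2.1)
  refine (hfin _ fun h hh => ?_).trans (Finset.sum_congr rfl fun h _ => ?_)
  · by_contra hx
    refine hh (finsum_eq_zero_of_forall_eq_zero fun i => ?_)
    by_contra h0
    exact hx ((hF a b c d e f g h i h0).2.2.2.2.2.2.2.1)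
  refine (hfin _ fun i hi => ?_)
  · by_contra hx
    by_contra h0
    exact hx ((hF a b c d e f g h i hi).2.2.2.2.2.2.2.2)

set_option maxHeartbeats 2000000 in
theorem stmt11 (m n k : ℕ) :
    (∑ᶠ (a : ℕ) (b : ℕ) (c : ℕ) (d : ℕ) (e : ℕ) (f : ℕ) (g : ℕ) (h : ℕ) (i : ℕ)
        (_ : a + d + f + g + 2*h = m ∧ b + d + e + f + 2*g + 2*h + 2*i = n ∧
             c + e + f + g + h + i = k),
        (X : Polynomial ℚ) ^ (a + b + c + d + e + f + g + h + i)) =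
      ∑ h ∈ Finset.range (min (m / 2) (min (n / 2) k) + 1),
      ∑ g ∈ Finset.range (min (m - 2*h) (min ((n - 2*h) / 2) (k - h)) + 1),
      ∑ f ∈ Finset.range (min (m - 2*h - g) (min (n - 2*h - 2*g) (k - h - g)) + 1),
      ∑ i ∈ Finset.range (min ((n - 2*h - 2*g - f) / 2) (k - h - g - f) + 1),
      ∑ d ∈ Finset.range (min (m - 2*h - g - f) (n - 2*h - 2*g - f - 2*i) + 1),
      ∑ e ∈ Finset.range (min (n - 2*h - 2*g - f - 2*i - d) (k - h - g - f - i) + 1),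
        (X : Polynomial ℚ) ^ (m + n + k - (d + e + 2*f + 3*g + 4*h + 2*i)) := by
  classical
  have e0 : ∀ a b c d e f g h i : ℕ,
      (∑ᶠ (_ : a + d + f + g + 2*h = m ∧ b + d + e + f + 2*g + 2*h + 2*i = n ∧
             c + e + f + g + h + i = k),
        (X : Polynomial ℚ) ^ (a + b + c + d + e + f + g + h + i)) =
      (if a + d + f + g + 2*h = m ∧ b + d + e + f + 2*g + 2*h + 2*i = n ∧
             c + e + f + g + h + i = k then
        (X : Polynomial ℚ) ^ (m + n + k - (d + e + 2*f + 3*g + 4*h + 2*i)) else 0) := by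
    intro a b c d e f g h i
    rw [finsum_eq_if]
    split_ifs with hP
    · congr 1
      omega
    · rfl
  simp only [e0]
  rw [collapse9 (m + n + k)
      (fun a b c d e f g h i =>
        if a + d + f + g + 2*h = m ∧ b + d + e + f + 2*g + 2*h + 2*i = n ∧
             c + e + f + g + h + i = k then
          (X : Polynomial ℚ) ^ (m + n + k - (d + e + 2*f + 3*g + 4*h + 2*i)) else 0)
      (by
        intro a b c d e f g h i h0
        by_cases hP : a + d + f + g + 2*h = m ∧ b + d + e + f + 2*g + 2*h + 2*i = n ∧
             c + e + f + g + h + i = k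
        · omega
        · simp only [if_neg hP] at h0
          exact absurd rfl h0)]
  simp only [← Finset.sum_product']
  simp only [Finset.sum_sigma']
  rw [← Finset.sum_filter]
  refine Finset.sum_nbij'
    (fun p => ⟨p.2.2.2.2.2.2.2.1, p.2.2.2.2.2.2.1, p.2.2.2.2.2.1, p.2.2.2.2.2.2.2.2,
      p.2.2.2.1, p.2.2.2.2.1⟩)
    (fun q => (m - (q.2.2.2.2.1 + q.2.2.1 + q.2.1 + 2*q.1),
       n - (q.2.2.2.2.1 + q.2.2.2.2.2 + q.2.2.1 + 2*q.2.1 + 2*q.1 + 2*q.2.2.2.1),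
       k - (q.2.2.2.2.2 + q.2.2.1 + q.2.1 + q.1 + q.2.2.2.1),
       q.2.2.2.2.1, q.2.2.2.2.2, q.2.2.1, q.2.1, q.1, q.2.2.2.1))
    ?_ ?_ ?_ ?_ ?_
  · rintro ⟨a, b, c, d, e, f, g, h, i⟩ hp
    simp only [Finset.mem_filter, Finset.mem_product, Finset.mem_range] at hp
    simp only [Finset.mem_sigma, Finset.mem_range]
    omega
  · rintro ⟨h, g, f, i, d, e⟩ hq
    simp only [Finset.mem_sigma, Finset.mem_range] at hq
    have A1 := hq.1
    have A2 := hq.2.1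
    have A3 := hq.2.2.1
    have A4 := hq.2.2.2.1
    have A5 := hq.2.2.2.2.1
    have A6 := hq.2.2.2.2.2
    clear hq
    have B1 : 2*h ≤ m ∧ 2*h ≤ n ∧ h ≤ k := by clear A2 A3 A4 A5 A6; omega
    clear A1
    have B2 : g + 2*h ≤ m ∧ 2*g + 2*h ≤ n ∧ g + h ≤ k := by clear A3 A4 A5 A6; omega
    clear A2
    have B3 : f + g + 2*h ≤ m ∧ f + 2*g + 2*h ≤ n ∧ f + g + h ≤ k := by clear A4 A5 A6; omega
    clear A3
    have B4 : 2*i + f + 2*g + 2*h ≤ n ∧ i + f + g + h ≤ k := by clear A5 A6; omega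
    clear A4
    have B5 : d + f + g + 2*h ≤ m ∧ d + 2*i + f + 2*g + 2*h ≤ n := by clear A6; omega
    clear A5
    have B6 : e + d + 2*i + f + 2*g + 2*h ≤ n ∧ e + i + f + g + h ≤ k := by omega
    clear A6
    simp only [Finset.mem_filter, Finset.mem_product, Finset.mem_range]
    omega
  · rintro ⟨a, b, c, d, e, f, g, h, i⟩ hp
    simp only [Finset.mem_filter, Finset.mem_product, Finset.mem_range] at hp
    simp only [Prod.mk.injEq, and_true]
    omega
  · rintro ⟨h, g, f, i, d, e⟩ _
    rfl
  · rintro ⟨a, b, c, d, e, f, g, h, i⟩ _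
    rfl
end
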